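/- Let M, N, n be nonnegative integers with M = ∑_{t=0}^{n−1} M_t 2^t and N = ∑_{t=0}^{n−1} N_t 2^t for bits M_t, N_t ∈ {0,1}. Form the ordered product of matrices, read with the rightmost factor first, whose factors are successively [[1,0],[M_{n−i},2]] for i = 1..n, then X = [[0,1],[1,0]], then [[1,0],[N_{n−i},2]] for i = 1..n. Then this total ordered product equals [[M, 2^n],[2^n + M·N, 2^n·N]]; in particular its first column is (M, 2^n + MN). -/
import Mathlib

lemma block_prod (n : ℕ) (b : Fin n → ℤ) :
    (List.ofFn fun t : Fin n => !![(1 : ℤ), 0; b t, 2]).prod =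
      !![(1 : ℤ), 0; ∑ t : Fin n, b t * 2 ^ (t : ℕ), 2 ^ n] := by
  induction n with
  | zero => simp [List.ofFn_zero, Matrix.one_fin_two]
  | succ n ih =>
    rw [List.ofFn_succ, List.prod_cons, ih fun t => b t.succ, Fin.sum_univ_succ]
    ext i j
    fin_cases i <;> fin_cases j <;>
      simp [Matrix.mul_apply, Fin.sum_univ_succ, mul_comm, mul_assoc, mul_left_comm,
        pow_succ, Finset.mul_sum] <;> ring

/-- The walk operator of the lower-bound construction: the n matrices encoding the
    bits of M (most significant bit applied first, i.e. bit n−i used at step i),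
    then the swap matrix, then the n matrices encoding the bits of N, multiply to
    [[M, 2^n],[2^n + MN, 2^n·N]].  The matrix with bit `Mb t` appears as the
    (t+1)-th factor from the left in the M-block, matching the ordering in which
    the factor for i = 1 (bit n−1) is applied first (rightmost). -/
theorem stmt_11 (n : ℕ) (Mb Nb : Fin n → ℤ)
    (hMb : ∀ t, Mb t = 0 ∨ Mb t = 1) (hNb : ∀ t, Nb t = 0 ∨ Nb t = 1)
    (M N : ℤ) (hM : M = ∑ t : Fin n, Mb t * 2 ^ (t : ℕ))
    (hN : N = ∑ t : Fin n, Nb t * 2 ^ (t : ℕ)) :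
    (List.ofFn fun t : Fin n => !![(1 : ℤ), 0; Nb t, 2]).prod *
        !![(0 : ℤ), 1; 1, 0] *
        (List.ofFn fun t : Fin n => !![(1 : ℤ), 0; Mb t, 2]).prod =
      !![M, 2 ^ n; 2 ^ n + M * N, 2 ^ n * N] := by
  rw [block_prod, block_prod, ← hM, ← hN]
  ext i j
  fin_cases i <;> fin_cases j <;>
    simp [Matrix.mul_apply, Fin.sum_univ_succ] <;> ring
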